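/- arXiv:2105.07955 — 5 statements merged into one kernel-verified Lean document; each statement's English description precedes it below -/
import Mathlib

section
/- Let T : ℕ → ℕ be the Collatz function, T(n) = n/2 if n is even and T(n) = 3n+1 if n is odd. If for every natural number m of the form 6x−1 or 6x+1 with x ≥ 1 there exists an i ≥ 1 with T^i(m) = 1, then for every natural number n ≥ 1 there exists an i ≥ 1 with T^i(n) = 1. -/
/-- The Collatz function. -/
def collatz (n : ℕ) : ℕ := if n % 2 = 0 then n / 2 else 3 * n + 1

lemma collatz_two_mul (m : ℕ) : collatz (2 * m) = m := by
  simp [collatz, Nat.mul_mod_right]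

lemma collatz_pow_two (k m : ℕ) : collatz^[k] (2 ^ k * m) = m := by
  induction k with
  | zero => simp
  | succ k ih =>
    have : (2 : ℕ) ^ (k + 1) * m = 2 * (2 ^ k * m) := by ring
    rw [this, Function.iterate_succ_apply, collatz_two_mul, ih]

lemma sixpm (q : ℕ) (h2 : q % 2 = 1) (h3 : q % 3 ≠ 0) (h1 : q ≠ 1) :
    ∃ x : ℕ, 1 ≤ x ∧ (q = 6 * x - 1 ∨ q = 6 * x + 1) := by
  have h6 : q % 6 = 1 ∨ q % 6 = 5 := by omega
  refine ⟨(q + 1) / 6, by omega, by omega⟩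

theorem collatz_of_sixPlusMinusOne
    (h : ∀ m x : ℕ, 1 ≤ x → (m = 6 * x - 1 ∨ m = 6 * x + 1) →
      ∃ i : ℕ, 1 ≤ i ∧ collatz^[i] m = 1) :
    ∀ n : ℕ, 1 ≤ n → ∃ i : ℕ, 1 ≤ i ∧ collatz^[i] n = 1 := by
  intro n
  induction n using Nat.strong_induction_on with
  | _ n ih =>
    intro hn
    rcases Nat.eq_or_lt_of_le hn with h1 | h1
    · -- n = 1
      refine ⟨3, by norm_num, ?_⟩
      rw [← h1]
      decide
    rcases Nat.even_or_odd n with he | ho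
    · -- even: n = 2 * (n/2)
      obtain ⟨m, hm⟩ := he
      have hm' : n = 2 * m := by omega
      have hmlt : m < n := by omega
      obtain ⟨i, hi1, hi2⟩ := ih m hmlt (by omega)
      refine ⟨i + 1, by omega, ?_⟩
      rw [Function.iterate_succ_apply, hm', collatz_two_mul, hi2]
    · -- odd
      have hno : n % 2 = 1 := Nat.odd_iff.mp ho
      by_cases h3 : n % 3 = 0
      · -- n odd multiple of 3
        have hcn : collatz n = 3 * n + 1 := by simp [collatz, hno]
        have hm0 : 3 * n + 1 ≠ 0 := by omega
        obtain ⟨k, q, hq2, hqe⟩ :=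
          Nat.exists_eq_pow_mul_and_not_dvd hm0 2 (by norm_num)
        have hq2' : q % 2 = 1 := by omega
        have hstep : collatz^[k + 1] n = q := by
          rw [Function.iterate_succ_apply, hcn, hqe, collatz_pow_two]
        by_cases hq1 : q = 1
        · exact ⟨k + 1, by omega, by rw [hstep, hq1]⟩
        · have hq3 : q % 3 ≠ 0 := by
            intro hq3
            have hd : (3 : ℕ) ∣ 3 * n + 1 :=
              hqe ▸ Dvd.dvd.mul_left (Nat.dvd_of_mod_eq_zero hq3) _
            omega
          obtain ⟨x, hx1, hx2⟩ := sixpm q hq2' hq3 hq1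
          obtain ⟨j, hj1, hj2⟩ := h q x hx1 hx2
          refine ⟨j + (k + 1), by omega, ?_⟩
          rw [Function.iterate_add_apply, hstep, hj2]
      · -- n odd, not multiple of 3
        obtain ⟨x, hx1, hx2⟩ := sixpm n hno h3 (by omega)
        exact h n x hx1 hx2
end

section
/- For every x ≥ 1, let k be the 2-adic valuation of 18x − 2. If k is odd, then (18x − 2)/2^k ≡ 5 (mod 6); if k is even, then (18x − 2)/2^k ≡ 1 (mod 6). -/
theorem residue_of_next_odd_sixSubOne (x : ℕ) (hx : 1 ≤ x)
    (k : ℕ) (hk : k = padicValNat 2 (18 * x - 2)) :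
    (Odd k → (18 * x - 2) / 2 ^ k % 6 = 5) ∧
      (Even k → (18 * x - 2) / 2 ^ k % 6 = 1) := by
  set n := 18 * x - 2 with hn
  have hn0 : n ≠ 0 := by omega
  subst hk
  have hdvd : 2 ^ padicValNat 2 n ∣ n := pow_padicValNat_dvd
  set m := n / 2 ^ padicValNat 2 n with hm
  have heq : n = 2 ^ padicValNat 2 n * m := (Nat.mul_div_cancel' hdvd).symm
  have hodd : ¬ 2 ∣ m := Nat.not_dvd_ordCompl Nat.prime_two hn0
  have hm2 : m % 2 = 1 := Nat.two_dvd_ne_zero.mp hodd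
  have hn3 : n % 3 = 1 := by omega
  have key : ∀ c, 2 ^ padicValNat 2 n % 3 = c → m % 6 = (if c = 2 then 5 else 1) := by
    intro c hc
    have h3 : (c * (m % 3)) % 3 = 1 := by
      rw [← hc, ← Nat.mul_mod, ← heq, hn3]
    have hc3 : c < 3 := hc ▸ Nat.mod_lt _ (by norm_num)
    interval_cases c <;> norm_num <;> omega
  constructor
  · rintro ⟨j, hj⟩
    have h2 : 2 ^ padicValNat 2 n % 3 = 2 := by
      rw [hj, pow_succ, pow_mul, Nat.mul_mod, Nat.pow_mod]; norm_num
    simpa using key 2 h2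
  · rintro ⟨j, hj⟩
    have h2 : 2 ^ padicValNat 2 n % 3 = 1 := by
      rw [hj, ← two_mul, pow_mul, Nat.pow_mod]; norm_num
    simpa using key 1 h2
end

section
/- Let T be the Collatz function (T(n) = n/2 for even n, T(n) = 3n+1 for odd n). For every x ≥ 1 with x ≡ 3 (mod 4), the 2-adic valuation of 18x − 2 equals 2, and T³(6x − 1) = (9x − 1)/2, which is congruent to 1 modulo 6; i.e., on the spiral the positive number x maps to a negative number. -/
theorem spiral_step_three_mod_four (x : ℕ) (hx : 1 ≤ x) (hmod : x % 4 = 3) :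
    padicValNat 2 (18 * x - 2) = 2 ∧
      collatz^[3] (6 * x - 1) = (9 * x - 1) / 2 ∧
      (9 * x - 1) / 2 % 6 = 1 := by
  obtain ⟨k, rfl⟩ : ∃ k, x = 4 * k + 3 := ⟨x / 4, by omega⟩
  refine ⟨?_, ?_, ?_⟩
  · have h : 18 * (4 * k + 3) - 2 = 4 * (18 * k + 13) := by ring_nf; omega
    rw [h, padicValNat.mul (by norm_num) (by omega)]
    have h4 : (4 : ℕ) = 2 ^ 2 := by norm_num
    rw [h4, padicValNat.prime_pow, padicValNat.eq_zero_of_not_dvd (by omega)]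
  · have h1 : 6 * (4 * k + 3) - 1 = 24 * k + 17 := by omega
    show collatz (collatz (collatz (6 * (4 * k + 3) - 1))) = _
    rw [h1]
    have c1 : collatz (24 * k + 17) = 72 * k + 52 := by
      rw [collatz, if_neg (by omega)]; omega
    have c2 : collatz (72 * k + 52) = 36 * k + 26 := by
      rw [collatz, if_pos (by omega)]; omega
    have c3 : collatz (36 * k + 26) = 18 * k + 13 := by
      rw [collatz, if_pos (by omega)]; omega
    rw [c1, c2, c3]; omega
  · omega
end

section
/- For all x, y ≥ 1, let k_x and k_y be the 2-adic valuations of 18x − 2 and 18y − 2 respectively. If k_x ≡ k_y (mod 6), then (18x − 2)/2^{k_x} ≡ (18y − 2)/2^{k_y} (mod 18). In particular, the residue modulo 18 of the next odd Collatz iterate of 6x − 1 depends only on k_x modulo 6, so the outputs of the infinitely many Diophantine equations fall into only six residue classes. -/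
lemma six_output_classes_key (x : ℕ) (hx : 1 ≤ x) :
    (18 * x - 2) / 2 ^ (padicValNat 2 (18 * x - 2)) % 18
      = 7 * 5 ^ ((padicValNat 2 (18 * x - 2)) % 6) % 18 := by
  set m := 18 * x - 2 with hmdef
  have hm : m = 18 * (x - 1) + 16 := by omega
  have hm0 : m ≠ 0 := by omega
  set k := padicValNat 2 m with hkdef
  set u := m / 2 ^ k with hudef
  have hmu : 2 ^ k * u = m := Nat.ordProj_mul_ordCompl_eq_self m 2
  have hu2 : ¬ 2 ∣ u := Nat.not_dvd_ordCompl Nat.prime_two hm0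
  have hm9 : m % 9 = 7 := by omega
  have hk9 : 2 ^ k % 9 = 2 ^ (k % 6) % 9 := by
    conv_lhs => rw [← Nat.div_add_mod k 6]
    rw [pow_add, pow_mul, Nat.mul_mod]
    have h64 : ((2:ℕ) ^ 6) ^ (k / 6) % 9 = 1 := by
      rw [Nat.pow_mod]; norm_num
    rw [h64, one_mul, Nat.mod_mod_of_dvd _ dvd_rfl]
  have hmod : 2 ^ (k % 6) % 9 * (u % 9) % 9 = 7 := by
    rw [← hk9, ← Nat.mul_mod, hmu, hm9]
  have hr : k % 6 < 6 := Nat.mod_lt _ (by norm_num)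
  interval_cases h : k % 6 <;> norm_num at hmod ⊢ <;> omega
  
theorem six_output_classes (x y : ℕ) (hx : 1 ≤ x) (hy : 1 ≤ y)
    (kx ky : ℕ) (hkx : kx = padicValNat 2 (18 * x - 2))
    (hky : ky = padicValNat 2 (18 * y - 2)) (h : kx % 6 = ky % 6) :
    (18 * x - 2) / 2 ^ kx % 18 = (18 * y - 2) / 2 ^ ky % 18 := by
  subst hkx hky
  rw [six_output_classes_key x hx, six_output_classes_key y hy, h]
end

section
/- Let T be the Collatz function (T(n) = n/2 for even n, T(n) = 3n+1 for odd n). Every non-trivial Collatz cycle passes through the domain of f₁ or f₂: if n > 4 and T^i(n) = n for some i ≥ 1, then there exists j with m = T^j(n) odd, m ≡ 5 (mod 6), and the 2-adic valuation of 3m + 1 at most 2. -/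
lemma Function.IsPeriodicPt.exists_iterate_iterate_eq {α : Type*} {f : α → α} {i : ℕ} {x : α}
    (h : Function.IsPeriodicPt f i x) (hi : 0 < i) (j : ℕ) : ∃ k, f^[k] (f^[j] x) = x :=
  ⟨i * j - j, by
    rw [← Function.iterate_add_apply, Nat.sub_add_cancel (Nat.le_mul_of_pos_left j hi)]
    exact (h.mul_const j).eq⟩

lemma exists_iterate_forall_le_iterate {α : Type*} [LinearOrder α] [WellFoundedLT α]
    (f : α → α) (x : α) : ∃ j, ∀ k, f^[j] x ≤ f^[k] (f^[j] x) := by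
  obtain ⟨_, ⟨j, rfl⟩, hmin⟩ :=
    wellFounded_lt.has_min (Set.range fun j => f^[j] x) ⟨x, 0, rfl⟩
  refine ⟨j, fun k => not_lt.1 ?_⟩
  rw [← Function.iterate_add_apply]
  exact hmin _ ⟨k + j, rfl⟩

lemma collatz_of_even {x : ℕ} (h : Even x) : collatz x = x / 2 := by
  simp [collatz, Nat.even_iff.1 h]

lemma collatz_of_odd {x : ℕ} (h : Odd x) : collatz x = 3 * x + 1 := by
  simp [collatz, Nat.odd_iff.1 h]

lemma collatz_iterate_two_pow_mul (k c : ℕ) : collatz^[k] (2 ^ k * c) = c := by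
  induction k with
  | zero => simp
  | succ k ih =>
    rw [Function.iterate_succ_apply, collatz_of_even (by simp [pow_succ, mul_assoc]), pow_succ,
      mul_comm _ 2, mul_assoc, Nat.mul_div_cancel_left _ two_pos, ih]

lemma collatz_iterate_succ_of_odd {x k c : ℕ} (hx : Odd x) (h : 3 * x + 1 = 2 ^ k * c) :
    collatz^[k + 1] x = c := by
  rw [Function.iterate_succ_apply, collatz_of_odd hx, h, collatz_iterate_two_pow_mul]

lemma mapsTo_collatz_one_two_four : Set.MapsTo collatz {1, 2, 4} {1, 2, 4} := by
  rintro x (rfl | rfl | rfl) <;> simp [collatz]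

section LeastElement

variable {m : ℕ} (hmin : ∀ k, m ≤ collatz^[k] m)
include hmin

lemma odd_of_forall_le_collatz_iterate (hm : 0 < m) : Odd m := by
  by_contra heven
  have := hmin 1
  rw [Function.iterate_one, collatz_of_even (Nat.not_odd_iff_even.1 heven)] at this
  omega

lemma not_four_dvd_of_forall_le_collatz_iterate (hm : 1 < m) (hodd : Odd m) :
    ¬ 4 ∣ 3 * m + 1 := by
  rintro ⟨c, hc⟩
  have := hmin 3
  rw [collatz_iterate_succ_of_odd (k := 2) hodd hc] at this
  omega

lemma collatz_iterate_two_of_forall_le_collatz_iterate (hm : 1 < m) (hodd : Odd m) :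
    Odd (collatz^[2] m) ∧ collatz^[2] m % 6 = 5 ∧
      padicValNat 2 (3 * collatz^[2] m + 1) ≤ 2 := by
  have hnot4 := not_four_dvd_of_forall_le_collatz_iterate hmin hm hodd
  obtain ⟨c, hc⟩ : 2 ∣ 3 * m + 1 := by rcases hodd with ⟨a, rfl⟩; omega
  have hc' : 3 * m + 1 = 2 ^ 1 * c := by rw [hc, pow_one]
  rw [collatz_iterate_succ_of_odd hodd hc']
  have hcodd : Odd c := by rw [Nat.odd_iff]; omega
  refine ⟨hcodd, by omega, ?_⟩
  rw [← not_lt, Nat.lt_iff_add_one_le,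
    ← padicValNat_dvd_iff_le_of_ne_one (by norm_num) (by omega)]
  rintro ⟨d, hd⟩
  have := hmin (4 + 2)
  rw [Function.iterate_add_apply, collatz_iterate_succ_of_odd hodd hc',
    collatz_iterate_succ_of_odd (k := 3) hcodd hd] at this
  omega

end LeastElement

theorem cycle_meets_f1_or_f2 (n : ℕ) (hn : 4 < n) (i : ℕ) (hi : 1 ≤ i)
    (hc : collatz^[i] n = n) :
    ∃ j : ℕ, Odd (collatz^[j] n) ∧ collatz^[j] n % 6 = 5 ∧
      padicValNat 2 (3 * collatz^[j] n + 1) ≤ 2 := by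
  obtain ⟨j, hmin⟩ := exists_iterate_forall_le_iterate collatz n
  obtain ⟨k, hk⟩ := Function.IsPeriodicPt.exists_iterate_iterate_eq hc hi j
  have hm : 1 < collatz^[j] n := by
    by_contra! hle
    interval_cases h : collatz^[j] n
    · rw [Function.iterate_fixed (by rfl : collatz 0 = 0)] at hk
      omega
    · have := mapsTo_collatz_one_two_four.iterate k (by simp : (1 : ℕ) ∈ ({1, 2, 4} : Set ℕ))
      rw [hk] at this
      simp only [Set.mem_insert_iff, Set.mem_singleton_iff] at this
      omega
  refine ⟨2 + j, ?_⟩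
  rw [Function.iterate_add_apply]
  exact collatz_iterate_two_of_forall_le_collatz_iterate hmin hm
    (odd_of_forall_le_collatz_iterate hmin (by omega))
end
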